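/- In any minimal conformation of length N ≥ 7, no two consecutive windows have directed types ←2 followed by →2. -/
import Mathlib


/-- Points of the cubic lattice `ℤ³`. -/
abbrev P3 : Type := Fin 3 → ℤ

def e1 : P3 := ![1, 0, 0]
def e2 : P3 := ![0, 1, 0]
def e3 : P3 := ![0, 0, 1]

/-- Squared Euclidean norm of an integer vector; it equals `1` iff the
Euclidean norm equals `1`. -/
def sqNorm (v : P3) : ℤ := ∑ k, (v k) ^ 2

/-- A conformation of length `N`: an injective map on `{1, …, N}` whose
consecutive steps have Euclidean length one. -/
def IsConformation (N : ℕ) (Γ : ℕ → P3) : Prop :=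
  Set.InjOn Γ (Set.Icc 1 N) ∧ ∀ i, 1 ≤ i → i < N → sqNorm (Γ (i + 1) - Γ i) = 1

/-- A lattice rotation: an orthogonal integer matrix of determinant one
(equivalently, a linear isometry of `ℝ³` mapping `ℤ³` onto `ℤ³` with
determinant one). -/
def IsLatticeRotation (R : Matrix (Fin 3) (Fin 3) ℤ) : Prop :=
  R.transpose * R = 1 ∧ R.det = 1

/-- Equivalence of length-5 conformations: `Δ' k = R (Δ k) + t` for a lattice
rotation `R` and translation `t ∈ ℤ³`. -/
def Equiv5 (Δ Δ' : Fin 5 → P3) : Prop :=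
  ∃ (R : Matrix (Fin 3) (Fin 3) ℤ) (t : P3),
    IsLatticeRotation R ∧ ∀ k, Δ' k = R.mulVec (Δ k) + t

/-- Reversal of a length-5 conformation (`k ↦ Δ (6 - k)` in 1-based indexing). -/
def rev5 (Δ : Fin 5 → P3) : Fin 5 → P3 := fun k => Δ k.rev

/-- Conformation 1: vertices (0,0,0), (1,0,0), (1,1,0), (0,1,0), (0,1,1). -/
def conf1 : Fin 5 → P3 := ![![0, 0, 0], ![1, 0, 0], ![1, 1, 0], ![0, 1, 0], ![0, 1, 1]]

/-- Conformation 2: vertices (0,0,0), (0,1,0), (−1,1,0), (−1,1,1), (−1,0,1). -/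
def conf2 : Fin 5 → P3 := ![![0, 0, 0], ![0, 1, 0], ![-1, 1, 0], ![-1, 1, 1], ![-1, 0, 1]]

/-- The `i`-th window of `Γ`: the 5-tuple `(Γ(i-2), …, Γ(i+2))`. -/
def window (Γ : ℕ → P3) (i : ℕ) : Fin 5 → P3 := fun k => Γ (i - 2 + (k : ℕ))

/-- `Φ(Δ) = 1`: the 5-tuple `Δ` or its reversal is equivalent to
conformation 1 or to conformation 2. -/
def WindowGood (Δ : Fin 5 → P3) : Prop :=
  Equiv5 Δ conf1 ∨ Equiv5 (rev5 Δ) conf1 ∨ Equiv5 Δ conf2 ∨ Equiv5 (rev5 Δ) conf2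

open Classical in
/-- The function `Φ` on length-5 conformations. -/
noncomputable def Phi (Δ : Fin 5 → P3) : ℤ := if WindowGood Δ then 1 else 0

/-- The energy `E₅(Γ) = −Σ_{i=3}^{N−2} Φ(Γ_i)`. -/
noncomputable def E5 (N : ℕ) (Γ : ℕ → P3) : ℤ :=
  -∑ i ∈ Finset.Icc 3 (N - 2), Phi (window Γ i)

/-- A minimal conformation: a conformation all of whose windows satisfy `Φ = 1`. -/
def IsMinimal (N : ℕ) (Γ : ℕ → P3) : Prop :=
  IsConformation N Γ ∧ ∀ i, 3 ≤ i → i ≤ N - 2 → WindowGood (window Γ i)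

/-- The walk starting at the origin (in 1-based indexing) whose steps
cyclically repeat the given list. -/
def cyclicWalk (steps : List P3) : ℕ → P3
  | 0 => 0
  | 1 => 0
  | n + 2 => cyclicWalk steps (n + 1) + steps.getD (n % steps.length) 0

/-- The 16-term step sequence of the lattice α-helix. -/
def alphaStepList : List P3 :=
  [e1, e2, -e1, e3, -e2, e1, e2, e3, -e1, -e2, e1, e3, e2, -e1, -e2, e3]

/-- The 4-term step sequence of the lattice β-strand. -/
def betaStepList : List P3 := [e1, e2, -e1, e3]

/-- The lattice α-helix (`H(1) = 0`, steps cyclically repeating `alphaStepList`). -/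
def alphaHelix : ℕ → P3 := cyclicWalk alphaStepList

/-- The lattice β-strand (`B(1) = 0`, steps cyclically repeating `betaStepList`). -/
def betaStrand : ℕ → P3 := cyclicWalk betaStepList

/-- The four directed types of windows. -/
inductive DType : Type
  | r1  -- →1
  | l1  -- ←1
  | r2  -- →2
  | l2  -- ←2
deriving DecidableEq

/-- A window `Δ` has directed type `→1` (resp. `→2`) if it is equivalent to
conformation 1 (resp. 2), and `←1` (resp. `←2`) if its reversal is. -/
def HasType (Δ : Fin 5 → P3) : DType → Prop
  | DType.r1 => Equiv5 Δ conf1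
  | DType.l1 => Equiv5 (rev5 Δ) conf1
  | DType.r2 => Equiv5 Δ conf2
  | DType.l2 => Equiv5 (rev5 Δ) conf2

/-- The six allowed ordered pairs of directed types of consecutive windows:
(→1,←1), (←1,→1), (→1,→2), (→2,←2), (←2,←1), (←2,→2). -/
def allowedPairs : List (DType × DType) :=
  [(DType.r1, DType.l1), (DType.l1, DType.r1), (DType.r1, DType.r2),
   (DType.r2, DType.l2), (DType.l2, DType.l1), (DType.l2, DType.r2)]

/-- `w` is the type sequence of `Γ` (a conformation of length `N`):
`w` has length `N − 4` and its `j`-th letter is the directed type of the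
window `Γ_{3+j}`, `j = 0, …, N−5`. -/
def HasTypeSeq (N : ℕ) (Γ : ℕ → P3) (w : List DType) : Prop :=
  w.length = N - 4 ∧ ∀ j (h : j < w.length), HasType (window Γ (3 + j)) (w.get ⟨j, h⟩)

/-- The word `α = →1→2←2←1`. -/
def wordAlpha : List DType := [DType.r1, DType.r2, DType.l2, DType.l1]

/-- The word `β = →1←1`. -/
def wordBeta : List DType := [DType.r1, DType.l1]

/-- `v` is a finite concatenation of copies of the words `α` and `β`. -/
def IsABConcat (v : List DType) : Prop :=
  ∃ L : List (List DType), (∀ u ∈ L, u = wordAlpha ∨ u = wordBeta) ∧ v = L.flatten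

/-- A word is admissible if it is a contiguous subword (factor) of some finite
concatenation of copies of `α` and `β`. -/
def Admissible (w : List DType) : Prop := ∃ v, IsABConcat v ∧ w <:+: v

/-- The two kinds of monomers. -/
inductive AB : Type
  | A
  | B
deriving DecidableEq

/-- The number of occurrences of the letter `c` in the `i`-th 5-tuple
`S(i−2), …, S(i+2)` of the sequence `S`. -/
def countLetter (c : AB) (S : ℕ → AB) (i : ℕ) : ℕ :=
  ((Finset.Icc (i - 2) (i + 2)).filter fun k => S k = c).card

open Classical in
/-- `Φ₁(Δ) = 1` iff `Δ` or its reversal is equivalent to conformation 1. -/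
noncomputable def Phi1 (Δ : Fin 5 → P3) : ℝ :=
  if Equiv5 Δ conf1 ∨ Equiv5 (rev5 Δ) conf1 then 1 else 0

open Classical in
/-- `Φ₂(Δ) = 1` iff `Δ` or its reversal is equivalent to conformation 2. -/
noncomputable def Phi2 (Δ : Fin 5 → P3) : ℝ :=
  if Equiv5 Δ conf2 ∨ Equiv5 (rev5 Δ) conf2 then 1 else 0

/-- The heteropolymer energy
`E₅′(S,Γ) = −Σᵢ [#_B(Sᵢ)(Φ₁(Γᵢ) + ε Φ₂(Γᵢ)) + #_A(Sᵢ)(Φ₂(Γᵢ) + ε Φ₁(Γᵢ))]`. -/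
noncomputable def E5' (ε : ℝ) (S : ℕ → AB) (N : ℕ) (Γ : ℕ → P3) : ℝ :=
  -∑ i ∈ Finset.Icc 3 (N - 2),
    ((countLetter AB.B S i : ℝ) * (Phi1 (window Γ i) + ε * Phi2 (window Γ i)) +
      (countLetter AB.A S i : ℝ) * (Phi2 (window Γ i) + ε * Phi1 (window Γ i)))


section Helpers

private lemma mulVec_cancel {R : Matrix (Fin 3) (Fin 3) ℤ} (hR : R.transpose * R = 1) {x y : P3}
    (h : R.mulVec x = R.mulVec y) : x = y := by
  have h2 := congrArg (R.transpose.mulVec) h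
  simpa [Matrix.mulVec_mulVec, hR, Matrix.one_mulVec] using h2

private lemma aff_cancel {R : Matrix (Fin 3) (Fin 3) ℤ} (hR : R.transpose * R = 1) {t x y z : P3}
    (h1 : R.mulVec x + t = z) (h2 : R.mulVec y + t = z) : x = y :=
  mulVec_cancel hR (add_right_cancel (h1.trans h2.symm))

private lemma comb3 {R : Matrix (Fin 3) (Fin 3) ℤ} {t x y z zx zy zz : P3}
    (hx : R.mulVec x + t = zx) (hy : R.mulVec y + t = zy) (hz : R.mulVec z + t = zz) :
    R.mulVec (x - y + z) + t = zx - zy + zz := by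
  subst hx hy hz
  rw [Matrix.mulVec_add, Matrix.mulVec_sub]
  abel

private lemma frame_eq {R T : Matrix (Fin 3) (Fin 3) ℤ} (hR : R.transpose * R = 1)
    {t u p q zp zq wp wq : P3}
    (hp : R.mulVec p + t = zp) (hq : R.mulVec q + t = zq)
    (hp' : T.mulVec p + u = wp) (hq' : T.mulVec q + u = wq) :
    (T * R.transpose).mulVec (zp - zq) = wp - wq := by
  subst hp hq hp' hq'
  have h1 : R.mulVec p + t - (R.mulVec q + t) = R.mulVec (p - q) := by
    rw [Matrix.mulVec_sub]; abel
  rw [h1, Matrix.mulVec_mulVec, mul_assoc, hR, mul_one, Matrix.mulVec_sub]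
  abel

private lemma det_contra {V : Matrix (Fin 3) (Fin 3) ℤ} (z1 z2 z3 w1 w2 w3 : P3)
    (h1 : V.mulVec z1 = w1) (h2 : V.mulVec z2 = w2) (h3 : V.mulVec z3 = w3) :
    V.det * (Matrix.of ![z1, z2, z3]).transpose.det
      = (Matrix.of ![w1, w2, w3]).transpose.det := by
  have key : V * (Matrix.of ![z1, z2, z3]).transpose = (Matrix.of ![w1, w2, w3]).transpose := by
    ext i j
    fin_cases j
    · simpa [Matrix.mul_apply, Matrix.mulVec, dotProduct] using congrFun h1 i
    · simpa [Matrix.mul_apply, Matrix.mulVec, dotProduct] using congrFun h2 i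
    · simpa [Matrix.mul_apply, Matrix.mulVec, dotProduct] using congrFun h3 i
  rw [← Matrix.det_mul, key]

end Helpers

/-- in any minimal conformation of length `N ≥ 7`, no two
consecutive windows have directed types ←2 followed by →2. -/
theorem no_l2_then_r2 (N : ℕ) (hN : 7 ≤ N) (Γ : ℕ → P3) (hΓ : IsMinimal N Γ) :
    ∀ i, 3 ≤ i → i + 1 ≤ N - 2 →
      ¬(HasType (window Γ i) DType.l2 ∧ HasType (window Γ (i + 1)) DType.r2) := by
  intro i hi3 hiN h
  obtain ⟨hL, hR2⟩ := h
  obtain ⟨R, t, ⟨hRo, hRdet⟩, hR⟩ := hL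
  obtain ⟨R', t', ⟨hR'o, hR'det⟩, hR'⟩ := hR2
  have hinj := hΓ.1.1
  -- equations from window i (type ←2)
  have hI0 : R.mulVec (Γ (i + 2)) + t = conf2 0 := by
    have h := (hR 0).symm
    simp only [rev5, window] at h
    rwa [show i - 2 + ((Fin.rev (0 : Fin 5) : Fin 5) : ℕ) = i + 2 by rw [show ((Fin.rev (0 : Fin 5) : Fin 5) : ℕ) = 4 from by decide]; omega] at h
  have hI1 : R.mulVec (Γ (i + 1)) + t = conf2 1 := by
    have h := (hR 1).symm
    simp only [rev5, window] at h
    rwa [show i - 2 + ((Fin.rev (1 : Fin 5) : Fin 5) : ℕ) = i + 1 by rw [show ((Fin.rev (1 : Fin 5) : Fin 5) : ℕ) = 3 from by decide]; omega] at h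
  have hI3 : R.mulVec (Γ (i - 1)) + t = conf2 3 := by
    have h := (hR 3).symm
    simp only [rev5, window] at h
    rwa [show i - 2 + ((Fin.rev (3 : Fin 5) : Fin 5) : ℕ) = i - 1 by rw [show ((Fin.rev (3 : Fin 5) : Fin 5) : ℕ) = 1 from by decide]; omega] at h
  have hI4 : R.mulVec (Γ (i - 2)) + t = conf2 4 := by
    have h := (hR 4).symm
    simp only [rev5, window] at h
    rwa [show i - 2 + ((Fin.rev (4 : Fin 5) : Fin 5) : ℕ) = i - 2 by rw [show ((Fin.rev (4 : Fin 5) : Fin 5) : ℕ) = 0 from by decide]; omega] at h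
  -- equations from window i+1 (type →2)
  have hJ0 : R'.mulVec (Γ (i - 1)) + t' = conf2 0 := by
    have h := (hR' 0).symm
    simp only [window] at h
    rwa [show i + 1 - 2 + (((0 : Fin 5)) : ℕ) = i - 1 by rw [show (((0 : Fin 5)) : ℕ) = 0 from by decide]; omega] at h
  have hJ1 : R'.mulVec (Γ i) + t' = conf2 1 := by
    have h := (hR' 1).symm
    simp only [window] at h
    rwa [show i + 1 - 2 + (((1 : Fin 5)) : ℕ) = i by rw [show (((1 : Fin 5)) : ℕ) = 1 from by decide]; omega] at h
  have hJ2 : R'.mulVec (Γ (i + 1)) + t' = conf2 2 := by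
    have h := (hR' 2).symm
    simp only [window] at h
    rwa [show i + 1 - 2 + (((2 : Fin 5)) : ℕ) = i + 1 by rw [show (((2 : Fin 5)) : ℕ) = 2 from by decide]; omega] at h
  have hJ3 : R'.mulVec (Γ (i + 2)) + t' = conf2 3 := by
    have h := (hR' 3).symm
    simp only [window] at h
    rwa [show i + 1 - 2 + (((3 : Fin 5)) : ℕ) = i + 2 by rw [show (((3 : Fin 5)) : ℕ) = 3 from by decide]; omega] at h
  have hJ4 : R'.mulVec (Γ (i + 3)) + t' = conf2 4 := by
    have h := (hR' 4).symm
    simp only [window] at h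
    rwa [show i + 1 - 2 + (((4 : Fin 5)) : ℕ) = i + 3 by rw [show (((4 : Fin 5)) : ℕ) = 4 from by decide]; omega] at h
  -- position of Γ (i-2) in the frame of window i+1
  have ha : Γ (i - 2) = Γ (i - 1) - Γ (i + 1) + Γ (i + 2) := by
    refine aff_cancel hRo hI4 ?_
    have h := comb3 hI3 hI1 hI0
    rwa [show conf2 3 - conf2 1 + conf2 0 = conf2 4 by decide] at h
  have hJa : R'.mulVec (Γ (i - 2)) + t' = ![0, 0, 1] := by
    rw [ha]
    have h := comb3 hJ0 hJ2 hJ3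
    rwa [show conf2 0 - conf2 2 + conf2 3 = ![0, 0, 1] by decide] at h
  rcases Nat.lt_or_ge i 4 with h4 | h4
  · -- Case A: i = 3, use window i+2
    have hW := hΓ.2 (i + 2) (by omega) (by omega)
    rcases hW with hT | hT | hT | hT
    · -- →1
      obtain ⟨T, u, ⟨hTo, hTdet⟩, hK⟩ := hT
      have hK0 : T.mulVec (Γ i) + u = conf1 0 := by
        have h := (hK 0).symm
        simp only [window] at h
        rwa [show i + 2 - 2 + (((0 : Fin 5)) : ℕ) = i by rw [show (((0 : Fin 5)) : ℕ) = 0 from by decide]; omega] at h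
      have hK1 : T.mulVec (Γ (i + 1)) + u = conf1 1 := by
        have h := (hK 1).symm
        simp only [window] at h
        rwa [show i + 2 - 2 + (((1 : Fin 5)) : ℕ) = i + 1 by rw [show (((1 : Fin 5)) : ℕ) = 1 from by decide]; omega] at h
      have hK2 : T.mulVec (Γ (i + 2)) + u = conf1 2 := by
        have h := (hK 2).symm
        simp only [window] at h
        rwa [show i + 2 - 2 + (((2 : Fin 5)) : ℕ) = i + 2 by rw [show (((2 : Fin 5)) : ℕ) = 2 from by decide]; omega] at h
      have hK3 : T.mulVec (Γ (i + 3)) + u = conf1 3 := by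
        have h := (hK 3).symm
        simp only [window] at h
        rwa [show i + 2 - 2 + (((3 : Fin 5)) : ℕ) = i + 3 by rw [show (((3 : Fin 5)) : ℕ) = 3 from by decide]; omega] at h
      have hrel : Γ (i + 3) = Γ (i + 2) - Γ (i + 1) + Γ i := by
        refine aff_cancel hTo hK3 ?_
        have h := comb3 hK2 hK1 hK0
        rwa [show conf1 2 - conf1 1 + conf1 0 = conf1 3 by decide] at h
      have h := comb3 hJ3 hJ2 hJ1
      rw [← hrel] at h
      exact absurd (hJ4.symm.trans h) (by decide)
    · -- ←1 : determinant contradiction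
      obtain ⟨T, u, ⟨hTo, hTdet⟩, hK⟩ := hT
      have hK1 : T.mulVec (Γ (i + 3)) + u = conf1 1 := by
        have h := (hK 1).symm
        simp only [rev5, window] at h
        rwa [show i + 2 - 2 + ((Fin.rev (1 : Fin 5) : Fin 5) : ℕ) = i + 3 by rw [show ((Fin.rev (1 : Fin 5) : Fin 5) : ℕ) = 3 from by decide]; omega] at h
      have hK2 : T.mulVec (Γ (i + 2)) + u = conf1 2 := by
        have h := (hK 2).symm
        simp only [rev5, window] at h
        rwa [show i + 2 - 2 + ((Fin.rev (2 : Fin 5) : Fin 5) : ℕ) = i + 2 by rw [show ((Fin.rev (2 : Fin 5) : Fin 5) : ℕ) = 2 from by decide]; omega] at h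
      have hK3 : T.mulVec (Γ (i + 1)) + u = conf1 3 := by
        have h := (hK 3).symm
        simp only [rev5, window] at h
        rwa [show i + 2 - 2 + ((Fin.rev (3 : Fin 5) : Fin 5) : ℕ) = i + 1 by rw [show ((Fin.rev (3 : Fin 5) : Fin 5) : ℕ) = 1 from by decide]; omega] at h
      have hK4 : T.mulVec (Γ i) + u = conf1 4 := by
        have h := (hK 4).symm
        simp only [rev5, window] at h
        rwa [show i + 2 - 2 + ((Fin.rev (4 : Fin 5) : Fin 5) : ℕ) = i by rw [show ((Fin.rev (4 : Fin 5) : Fin 5) : ℕ) = 0 from by decide]; omega] at h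
      have hV1 := frame_eq hR'o hJ2 hJ1 hK3 hK4
      have hV2 := frame_eq hR'o hJ3 hJ1 hK2 hK4
      have hV3 := frame_eq hR'o hJ4 hJ1 hK1 hK4
      have hdet := det_contra _ _ _ _ _ _ hV1 hV2 hV3
      rw [Matrix.det_mul, hTdet, Matrix.det_transpose, hR'det] at hdet
      revert hdet
      decide
    · -- →2 : collision Γ (i+4) = Γ (i-2)
      obtain ⟨T, u, ⟨hTo, hTdet⟩, hK⟩ := hT
      have hK0 : T.mulVec (Γ i) + u = conf2 0 := by
        have h := (hK 0).symm
        simp only [window] at h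
        rwa [show i + 2 - 2 + (((0 : Fin 5)) : ℕ) = i by rw [show (((0 : Fin 5)) : ℕ) = 0 from by decide]; omega] at h
      have hK1 : T.mulVec (Γ (i + 1)) + u = conf2 1 := by
        have h := (hK 1).symm
        simp only [window] at h
        rwa [show i + 2 - 2 + (((1 : Fin 5)) : ℕ) = i + 1 by rw [show (((1 : Fin 5)) : ℕ) = 1 from by decide]; omega] at h
      have hK3 : T.mulVec (Γ (i + 3)) + u = conf2 3 := by
        have h := (hK 3).symm
        simp only [window] at h
        rwa [show i + 2 - 2 + (((3 : Fin 5)) : ℕ) = i + 3 by rw [show (((3 : Fin 5)) : ℕ) = 3 from by decide]; omega] at h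
      have hK4 : T.mulVec (Γ (i + 4)) + u = conf2 4 := by
        have h := (hK 4).symm
        simp only [window] at h
        rwa [show i + 2 - 2 + (((4 : Fin 5)) : ℕ) = i + 4 by rw [show (((4 : Fin 5)) : ℕ) = 4 from by decide]; omega] at h
      have hrel : Γ (i + 4) = Γ (i + 3) - Γ (i + 1) + Γ i := by
        refine aff_cancel hTo hK4 ?_
        have h := comb3 hK3 hK1 hK0
        rwa [show conf2 3 - conf2 1 + conf2 0 = conf2 4 by decide] at h
      have hg : R'.mulVec (Γ (i + 4)) + t' = ![0, 0, 1] := by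
        rw [hrel]
        have h := comb3 hJ4 hJ2 hJ1
        rwa [show conf2 4 - conf2 2 + conf2 1 = ![0, 0, 1] by decide] at h
      have heq := aff_cancel hR'o hg hJa
      have := hinj (Set.mem_Icc.mpr ⟨by omega, by omega⟩) (Set.mem_Icc.mpr ⟨by omega, by omega⟩) heq
      omega
    · -- ←2 : collision Γ (i+4) = Γ (i-2)
      obtain ⟨T, u, ⟨hTo, hTdet⟩, hK⟩ := hT
      have hK0 : T.mulVec (Γ (i + 4)) + u = conf2 0 := by
        have h := (hK 0).symm
        simp only [rev5, window] at h
        rwa [show i + 2 - 2 + ((Fin.rev (0 : Fin 5) : Fin 5) : ℕ) = i + 4 by rw [show ((Fin.rev (0 : Fin 5) : Fin 5) : ℕ) = 4 from by decide]; omega] at h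
      have hK1 : T.mulVec (Γ (i + 3)) + u = conf2 1 := by
        have h := (hK 1).symm
        simp only [rev5, window] at h
        rwa [show i + 2 - 2 + ((Fin.rev (1 : Fin 5) : Fin 5) : ℕ) = i + 3 by rw [show ((Fin.rev (1 : Fin 5) : Fin 5) : ℕ) = 3 from by decide]; omega] at h
      have hK3 : T.mulVec (Γ (i + 1)) + u = conf2 3 := by
        have h := (hK 3).symm
        simp only [rev5, window] at h
        rwa [show i + 2 - 2 + ((Fin.rev (3 : Fin 5) : Fin 5) : ℕ) = i + 1 by rw [show ((Fin.rev (3 : Fin 5) : Fin 5) : ℕ) = 1 from by decide]; omega] at h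
      have hK4 : T.mulVec (Γ i) + u = conf2 4 := by
        have h := (hK 4).symm
        simp only [rev5, window] at h
        rwa [show i + 2 - 2 + ((Fin.rev (4 : Fin 5) : Fin 5) : ℕ) = i by rw [show ((Fin.rev (4 : Fin 5) : Fin 5) : ℕ) = 0 from by decide]; omega] at h
      have hrel0 : Γ i = Γ (i + 1) - Γ (i + 3) + Γ (i + 4) := by
        refine aff_cancel hTo hK4 ?_
        have h := comb3 hK3 hK1 hK0
        rwa [show conf2 3 - conf2 1 + conf2 0 = conf2 4 by decide] at h
      have hrel : Γ (i + 4) = Γ i - Γ (i + 1) + Γ (i + 3) := by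
        rw [hrel0]; abel
      have hg : R'.mulVec (Γ (i + 4)) + t' = ![0, 0, 1] := by
        rw [hrel]
        have h := comb3 hJ1 hJ2 hJ4
        rwa [show conf2 1 - conf2 2 + conf2 4 = ![0, 0, 1] by decide] at h
      have heq := aff_cancel hR'o hg hJa
      have := hinj (Set.mem_Icc.mpr ⟨by omega, by omega⟩) (Set.mem_Icc.mpr ⟨by omega, by omega⟩) heq
      omega
  · -- Case B: 4 ≤ i, use window i-1
    have hW := hΓ.2 (i - 1) (by omega) (by omega)
    rcases hW with hT | hT | hT | hT
    · -- →1 : determinant contradiction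
      obtain ⟨T, u, ⟨hTo, hTdet⟩, hK⟩ := hT
      have hK1 : T.mulVec (Γ (i - 2)) + u = conf1 1 := by
        have h := (hK 1).symm
        simp only [window] at h
        rwa [show i - 1 - 2 + (((1 : Fin 5)) : ℕ) = i - 2 by rw [show (((1 : Fin 5)) : ℕ) = 1 from by decide]; omega] at h
      have hK2 : T.mulVec (Γ (i - 1)) + u = conf1 2 := by
        have h := (hK 2).symm
        simp only [window] at h
        rwa [show i - 1 - 2 + (((2 : Fin 5)) : ℕ) = i - 1 by rw [show (((2 : Fin 5)) : ℕ) = 2 from by decide]; omega] at h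
      have hK3 : T.mulVec (Γ i) + u = conf1 3 := by
        have h := (hK 3).symm
        simp only [window] at h
        rwa [show i - 1 - 2 + (((3 : Fin 5)) : ℕ) = i by rw [show (((3 : Fin 5)) : ℕ) = 3 from by decide]; omega] at h
      have hK4 : T.mulVec (Γ (i + 1)) + u = conf1 4 := by
        have h := (hK 4).symm
        simp only [window] at h
        rwa [show i - 1 - 2 + (((4 : Fin 5)) : ℕ) = i + 1 by rw [show (((4 : Fin 5)) : ℕ) = 4 from by decide]; omega] at h
      have hV1 := frame_eq hR'o hJ0 hJa hK2 hK1
      have hV2 := frame_eq hR'o hJ1 hJa hK3 hK1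
      have hV3 := frame_eq hR'o hJ2 hJa hK4 hK1
      have hdet := det_contra _ _ _ _ _ _ hV1 hV2 hV3
      rw [Matrix.det_mul, hTdet, Matrix.det_transpose, hR'det] at hdet
      revert hdet
      decide
    · -- ←1
      obtain ⟨T, u, ⟨hTo, hTdet⟩, hK⟩ := hT
      have hK0 : T.mulVec (Γ (i + 1)) + u = conf1 0 := by
        have h := (hK 0).symm
        simp only [rev5, window] at h
        rwa [show i - 1 - 2 + ((Fin.rev (0 : Fin 5) : Fin 5) : ℕ) = i + 1 by rw [show ((Fin.rev (0 : Fin 5) : Fin 5) : ℕ) = 4 from by decide]; omega] at h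
      have hK1 : T.mulVec (Γ i) + u = conf1 1 := by
        have h := (hK 1).symm
        simp only [rev5, window] at h
        rwa [show i - 1 - 2 + ((Fin.rev (1 : Fin 5) : Fin 5) : ℕ) = i by rw [show ((Fin.rev (1 : Fin 5) : Fin 5) : ℕ) = 3 from by decide]; omega] at h
      have hK2 : T.mulVec (Γ (i - 1)) + u = conf1 2 := by
        have h := (hK 2).symm
        simp only [rev5, window] at h
        rwa [show i - 1 - 2 + ((Fin.rev (2 : Fin 5) : Fin 5) : ℕ) = i - 1 by rw [show ((Fin.rev (2 : Fin 5) : Fin 5) : ℕ) = 2 from by decide]; omega] at h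
      have hK3 : T.mulVec (Γ (i - 2)) + u = conf1 3 := by
        have h := (hK 3).symm
        simp only [rev5, window] at h
        rwa [show i - 1 - 2 + ((Fin.rev (3 : Fin 5) : Fin 5) : ℕ) = i - 2 by rw [show ((Fin.rev (3 : Fin 5) : Fin 5) : ℕ) = 1 from by decide]; omega] at h
      have hrel : Γ (i - 2) = Γ (i - 1) - Γ i + Γ (i + 1) := by
        refine aff_cancel hTo hK3 ?_
        have h := comb3 hK2 hK1 hK0
        rwa [show conf1 2 - conf1 1 + conf1 0 = conf1 3 by decide] at h
      have h := comb3 hJ0 hJ1 hJ2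
      rw [← hrel] at h
      exact absurd (hJa.symm.trans h) (by decide)
    · -- →2 : collision Γ (i-3) = Γ (i+3)
      obtain ⟨T, u, ⟨hTo, hTdet⟩, hK⟩ := hT
      have hK0 : T.mulVec (Γ (i - 3)) + u = conf2 0 := by
        have h := (hK 0).symm
        simp only [window] at h
        rwa [show i - 1 - 2 + (((0 : Fin 5)) : ℕ) = i - 3 by rw [show (((0 : Fin 5)) : ℕ) = 0 from by decide]; omega] at h
      have hK1 : T.mulVec (Γ (i - 2)) + u = conf2 1 := by
        have h := (hK 1).symm
        simp only [window] at h
        rwa [show i - 1 - 2 + (((1 : Fin 5)) : ℕ) = i - 2 by rw [show (((1 : Fin 5)) : ℕ) = 1 from by decide]; omega] at h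
      have hK3 : T.mulVec (Γ i) + u = conf2 3 := by
        have h := (hK 3).symm
        simp only [window] at h
        rwa [show i - 1 - 2 + (((3 : Fin 5)) : ℕ) = i by rw [show (((3 : Fin 5)) : ℕ) = 3 from by decide]; omega] at h
      have hK4 : T.mulVec (Γ (i + 1)) + u = conf2 4 := by
        have h := (hK 4).symm
        simp only [window] at h
        rwa [show i - 1 - 2 + (((4 : Fin 5)) : ℕ) = i + 1 by rw [show (((4 : Fin 5)) : ℕ) = 4 from by decide]; omega] at h
      have hrel : Γ (i - 3) = Γ (i - 2) - Γ i + Γ (i + 1) := by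
        refine aff_cancel hTo hK0 ?_
        have h := comb3 hK1 hK3 hK4
        rwa [show conf2 1 - conf2 3 + conf2 4 = conf2 0 by decide] at h
      have hy : R'.mulVec (Γ (i - 3)) + t' = conf2 4 := by
        rw [hrel]
        have h := comb3 hJa hJ1 hJ2
        rwa [show (![0, 0, 1] : P3) - conf2 1 + conf2 2 = conf2 4 by decide] at h
      have heq := aff_cancel hR'o hy hJ4
      have := hinj (Set.mem_Icc.mpr ⟨by omega, by omega⟩) (Set.mem_Icc.mpr ⟨by omega, by omega⟩) heq
      omega
    · -- ←2 : collision Γ (i-3) = Γ (i+3)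
      obtain ⟨T, u, ⟨hTo, hTdet⟩, hK⟩ := hT
      have hK0 : T.mulVec (Γ (i + 1)) + u = conf2 0 := by
        have h := (hK 0).symm
        simp only [rev5, window] at h
        rwa [show i - 1 - 2 + ((Fin.rev (0 : Fin 5) : Fin 5) : ℕ) = i + 1 by rw [show ((Fin.rev (0 : Fin 5) : Fin 5) : ℕ) = 4 from by decide]; omega] at h
      have hK1 : T.mulVec (Γ i) + u = conf2 1 := by
        have h := (hK 1).symm
        simp only [rev5, window] at h
        rwa [show i - 1 - 2 + ((Fin.rev (1 : Fin 5) : Fin 5) : ℕ) = i by rw [show ((Fin.rev (1 : Fin 5) : Fin 5) : ℕ) = 3 from by decide]; omega] at h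
      have hK3 : T.mulVec (Γ (i - 2)) + u = conf2 3 := by
        have h := (hK 3).symm
        simp only [rev5, window] at h
        rwa [show i - 1 - 2 + ((Fin.rev (3 : Fin 5) : Fin 5) : ℕ) = i - 2 by rw [show ((Fin.rev (3 : Fin 5) : Fin 5) : ℕ) = 1 from by decide]; omega] at h
      have hK4 : T.mulVec (Γ (i - 3)) + u = conf2 4 := by
        have h := (hK 4).symm
        simp only [rev5, window] at h
        rwa [show i - 1 - 2 + ((Fin.rev (4 : Fin 5) : Fin 5) : ℕ) = i - 3 by rw [show ((Fin.rev (4 : Fin 5) : Fin 5) : ℕ) = 0 from by decide]; omega] at h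
      have hrel : Γ (i - 3) = Γ (i - 2) - Γ i + Γ (i + 1) := by
        refine aff_cancel hTo hK4 ?_
        have h := comb3 hK3 hK1 hK0
        rwa [show conf2 3 - conf2 1 + conf2 0 = conf2 4 by decide] at h
      have hy : R'.mulVec (Γ (i - 3)) + t' = conf2 4 := by
        rw [hrel]
        have h := comb3 hJa hJ1 hJ2
        rwa [show (![0, 0, 1] : P3) - conf2 1 + conf2 2 = conf2 4 by decide] at h
      have heq := aff_cancel hR'o hy hJ4
      have := hinj (Set.mem_Icc.mpr ⟨by omega, by omega⟩) (Set.mem_Icc.mpr ⟨by omega, by omega⟩) heq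
      omega
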